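/- Under the hypotheses of the previous statement (|θ_i − θ_j| < δ for all i,j ∈ s, π(i) = exp(θ_i)/Σ_{j∈s} exp(θ_j)), one also has |(1/|s|)/π(i) − 1| ≤ (1 − 1/|s|)(e^{4δ} − 1). -/

import Mathlib

lemma abs_exp_sub_one_le {x a : ℝ} (h : |x| ≤ a) : |Real.exp x - 1| ≤ Real.exp a - 1 := by
  have hx1 : x ≤ a := le_trans (le_abs_self x) h
  have hx2 : -a ≤ x := neg_le_of_abs_le h
  rw [abs_le]
  constructor
  · have h1 : Real.exp (-a) ≤ Real.exp x := Real.exp_le_exp.mpr hx2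
    have h2 : (-a) + 1 ≤ Real.exp (-a) := Real.add_one_le_exp _
    have h3 : a + 1 ≤ Real.exp a := Real.add_one_le_exp _
    nlinarith
  · nlinarith [Real.exp_le_exp.mpr hx1]

/-- Under `|θ_i − θ_j| < δ` and `π(i) = exp(θ_i)/Σ_j exp(θ_j)` on a finite nonempty set,
`|(1/|s|)/π(i) − 1| ≤ (1 − 1/|s|)(e^{4δ} − 1)`. -/
theorem stmt_17 {ι : Type*} [Fintype ι] [Nonempty ι] (δ : ℝ) (hδ : 0 < δ)
    (θ : ι → ℝ) (hθ : ∀ i j, |θ i - θ j| < δ) (i : ι) :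
    |((Fintype.card ι : ℝ))⁻¹ / (Real.exp (θ i) / ∑ j, Real.exp (θ j)) - 1| ≤
      (1 - ((Fintype.card ι : ℝ))⁻¹) * (Real.exp (4 * δ) - 1) := by
  classical
  set n : ℝ := (Fintype.card ι : ℝ) with hn_def
  have hn : (0 : ℝ) < n := by
    rw [hn_def]
    exact_mod_cast Fintype.card_pos (α := ι)
  have hei : 0 < Real.exp (θ i) := Real.exp_pos _
  have key : n⁻¹ / (Real.exp (θ i) / ∑ j, Real.exp (θ j)) - 1
      = n⁻¹ * ∑ j, (Real.exp (θ j - θ i) - 1) := by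
    have hsum : ∑ j, (Real.exp (θ j - θ i) - 1)
        = (∑ j, Real.exp (θ j)) / Real.exp (θ i) - n := by
      rw [Finset.sum_sub_distrib]
      simp only [Real.exp_sub, Finset.sum_const, Finset.card_univ, nsmul_eq_mul, mul_one]
      rw [← Finset.sum_div]
    rw [hsum]
    field_simp
  rw [key]
  have habs : |∑ j, (Real.exp (θ j - θ i) - 1)| ≤ (n - 1) * (Real.exp (4 * δ) - 1) := by
    calc |∑ j, (Real.exp (θ j - θ i) - 1)| ≤ ∑ j, |Real.exp (θ j - θ i) - 1| :=
          Finset.abs_sum_le_sum_abs _ _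
      _ ≤ ∑ j : ι, (if j = i then 0 else (Real.exp (4 * δ) - 1)) := by
          apply Finset.sum_le_sum
          intro j _
          by_cases hji : j = i
          · simp [hji]
          · simp only [hji, if_false]
            apply abs_exp_sub_one_le
            have := hθ j i
            nlinarith [abs_nonneg (θ j - θ i)]
      _ = (n - 1) * (Real.exp (4 * δ) - 1) := by
          have hrw : ∀ j : ι, (if j = i then (0:ℝ) else (Real.exp (4 * δ) - 1))
              = (Real.exp (4 * δ) - 1) - (if j = i then (Real.exp (4 * δ) - 1) else 0) := by
            intro j; split <;> ring
          simp_rw [hrw]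
          rw [Finset.sum_sub_distrib, Finset.sum_const, Finset.card_univ,
            Finset.sum_ite_eq' Finset.univ i (fun _ => (Real.exp (4 * δ) - 1))]
          simp only [Finset.mem_univ, if_true, nsmul_eq_mul]
          rw [hn_def]
          ring
  rw [abs_mul, abs_of_nonneg (by positivity : (0:ℝ) ≤ n⁻¹)]
  calc n⁻¹ * |∑ j, (Real.exp (θ j - θ i) - 1)| ≤ n⁻¹ * ((n - 1) * (Real.exp (4 * δ) - 1)) := by
        apply mul_le_mul_of_nonneg_left habs (by positivity)
    _ = (1 - n⁻¹) * (Real.exp (4 * δ) - 1) := by field_simp
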